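/- Suppose G : (0,T] × ℝ^d × ℝ^d → ℝ satisfies 0 ≤ G(t,x,y) ≤ C₁ t^{−d/2} exp(−C₂|x−y|²/t) for all t ∈ (0,T] and x,y ∈ ℝ^d, with C₁, C₂ > 0. Then with ρ(x) = 1/(1+|x|^r), r > 0, there exists C(r,T) > 0 such that ∫_{ℝ^d} G(t,x,y) ρ(y) dy ≤ C(r,T) ρ(x) for all t ∈ (0,T] and x ∈ ℝ^d. -/

import Mathlib

/-!
Peetre's inequality `1 + |x|^r ≤ 2^r (1 + |x - y|^r) (1 + |y|^r)` gives
`ρ y ≤ 2^r (1 + |x - y|^r) ρ x`, so it suffices to bound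
`∫ t^(-d/2) exp (-C₂ |x - y|² / t) (1 + |x - y|^r) dy` uniformly in `t ≤ T` and `x`.
The parabolic substitution `u = (x - y) / √t` absorbs the factor `t^(-d/2)` and turns this
integral into `∫ (1 + t^(r/2) |u|^r) exp (-C₂ |u|²) du`, which is at most
`∫ (1 + T^(r/2) |u|^r) exp (-C₂ |u|²) du`;
this is finite since the polynomial weight is `o(exp (C₂ |u|² / 2))`.
-/

open Real MeasureTheory Filter Asymptotics Module

lemma Real.add_rpow_le_two_rpow_mul_rpow_add_rpow {a b p : ℝ} (ha : 0 ≤ a) (hb : 0 ≤ b)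
    (hp : 0 ≤ p) : (a + b) ^ p ≤ 2 ^ p * (a ^ p + b ^ p) := calc
  (a + b) ^ p ≤ (2 * max a b) ^ p := by
    rw [two_mul]; gcongr <;> simp
  _ = 2 ^ p * max a b ^ p := mul_rpow zero_le_two (le_max_of_le_left ha)
  _ ≤ 2 ^ p * (a ^ p + b ^ p) := by
    gcongr
    rcases le_total a b with h | h
    · simpa [max_eq_right h] using rpow_nonneg ha p
    · simpa [max_eq_left h] using rpow_nonneg hb p

section Peetre

variable {F : Type*} [SeminormedAddCommGroup F] {r : ℝ}

lemma one_add_norm_rpow_le (hr : 0 ≤ r) (x y : F) :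
    1 + ‖x‖ ^ r ≤ 2 ^ r * (1 + ‖x - y‖ ^ r) * (1 + ‖y‖ ^ r) := by
  have hx : ‖x‖ ^ r ≤ 2 ^ r * (‖x - y‖ ^ r + ‖y‖ ^ r) := calc
    ‖x‖ ^ r ≤ (‖x - y‖ + ‖y‖) ^ r := by gcongr; exact norm_le_norm_sub_add x y
    _ ≤ 2 ^ r * (‖x - y‖ ^ r + ‖y‖ ^ r) :=
      add_rpow_le_two_rpow_mul_rpow_add_rpow (norm_nonneg _) (norm_nonneg _) hr
  have h2 : 1 ≤ (2 : ℝ) ^ r := one_le_rpow one_le_two hr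
  have hxy : 0 ≤ ‖x - y‖ ^ r * ‖y‖ ^ r := by positivity
  nlinarith

lemma inv_one_add_norm_rpow_le (hr : 0 ≤ r) (x y : F) :
    (1 + ‖y‖ ^ r)⁻¹ ≤ 2 ^ r * (1 + ‖x - y‖ ^ r) * (1 + ‖x‖ ^ r)⁻¹ := by
  rw [← div_eq_mul_inv, inv_le_iff_one_le_mul₀ (by positivity), div_mul_eq_mul_div,
    one_le_div₀ (by positivity)]
  exact one_add_norm_rpow_le hr x y

end Peetre

lemma isBigO_one_add_mul_rpow_mul_exp_neg_mul_sq {r c : ℝ} (a : ℝ) (hc : 0 < c) :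
    (fun s : ℝ => (1 + a * s ^ r) * exp (-c * s ^ 2)) =O[atTop]
      fun s => exp (-(c / 2) * s ^ 2) := by
  have hone : (fun _ : ℝ => (1 : ℝ)) =O[atTop] fun s => exp (c / 2 * s ^ 2) :=
    IsBigO.of_bound 1 <| Eventually.of_forall fun s => by
      simpa using one_le_exp (by positivity : 0 ≤ c / 2 * s ^ 2)
  have hpow : (fun s : ℝ => s ^ r) =O[atTop] fun s => exp (c / 2 * s ^ 2) := by
    refine ((isLittleO_rpow_exp_pos_mul_atTop (r / 2) (half_pos hc)).comp_tendsto
      (tendsto_pow_atTop two_ne_zero)).isBigO.congr' ?_ EventuallyEq.rfl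
    filter_upwards [eventually_ge_atTop 0] with s hs
    simp only [Function.comp_apply, ← rpow_natCast, ← rpow_mul hs]
    ring_nf
  refine ((hone.add (hpow.const_mul_left a)).mul (isBigO_refl _ _)).congr_right fun s => ?_
  rw [← exp_add]
  ring_nf

section WeightedGaussian

variable {E : Type*}

noncomputable def weightedGaussian [SeminormedAddCommGroup E] (a r c : ℝ) (u : E) : ℝ :=
  (1 + a * ‖u‖ ^ r) * exp (-c * ‖u‖ ^ 2)

lemma weightedGaussian_nonneg [SeminormedAddCommGroup E] {a r : ℝ} (ha : 0 ≤ a) (c : ℝ)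
    (u : E) : 0 ≤ weightedGaussian a r c u := by
  unfold weightedGaussian; positivity

lemma exp_neg_mul_sq_div_mul_one_add_rpow_le_weightedGaussian [NormedAddCommGroup E]
    [NormedSpace ℝ E] {r T t : ℝ} (c : ℝ) (hr : 0 ≤ r) (ht : 0 < t) (htT : t ≤ T) (v : E) :
    exp (-c * ‖v‖ ^ 2 / t) * (1 + ‖v‖ ^ r) ≤ weightedGaussian (√T ^ r) r c ((√t)⁻¹ • v) := by
  have hst : 0 < √t := sqrt_pos.2 ht
  obtain ⟨w, rfl⟩ : ∃ w, v = √t • w := ⟨(√t)⁻¹ • v, by rw [smul_inv_smul₀ hst.ne']⟩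
  rw [inv_smul_smul₀ hst.ne', weightedGaussian, mul_comm, norm_smul, norm_of_nonneg hst.le,
    mul_pow, sq_sqrt ht.le, mul_rpow hst.le (norm_nonneg w),
    show -c * (t * ‖w‖ ^ 2) / t = -c * ‖w‖ ^ 2 by field_simp]
  gcongr

section InnerProductSpace

variable [NormedAddCommGroup E] [InnerProductSpace ℝ E] [FiniteDimensional ℝ E]
  [MeasurableSpace E] [BorelSpace E]

lemma integrable_exp_neg_mul_sq_norm {c : ℝ} (hc : 0 < c) :
    Integrable fun u : E => exp (-c * ‖u‖ ^ 2) := by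
  refine (GaussianFourier.integrable_cexp_neg_mul_sq_norm_add (V := E) (b := c)
    (by simpa using hc) 0 0).norm.congr (Eventually.of_forall fun u => ?_)
  simp [Complex.norm_exp, ← Complex.ofReal_pow]

lemma integrable_weightedGaussian (a : ℝ) {r c : ℝ} (hr : 0 ≤ r) (hc : 0 < c) :
    Integrable (weightedGaussian a r c : E → ℝ) := by
  have hcont : Continuous (weightedGaussian a r c : E → ℝ) := by
    unfold weightedGaussian
    fun_prop (disch := exact hr)
  exact hcont.locallyIntegrable.integrable_of_isBigO_cocompact
    ((isBigO_one_add_mul_rpow_mul_exp_neg_mul_sq a hc).comp_tendsto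
      tendsto_norm_cocompact_atTop)
    ((integrable_exp_neg_mul_sq_norm (half_pos hc)).integrableAtFilter _)

end InnerProductSpace

end WeightedGaussian

section Rescaling

variable {E : Type*} [NormedAddCommGroup E] [NormedSpace ℝ E] [FiniteDimensional ℝ E]
  [MeasurableSpace E] [BorelSpace E] {μ : Measure E} [μ.IsAddHaarMeasure] {t : ℝ}

lemma MeasureTheory.Integrable.comp_inv_sqrt_smul_sub {f : E → ℝ} (hf : Integrable f μ) (ht : 0 < t)
    (x : E) : Integrable (fun y => f ((√t)⁻¹ • (x - y))) μ :=
  ((integrable_comp_smul_iff μ f (inv_ne_zero (sqrt_pos.2 ht).ne')).2 hf).comp_sub_left x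

lemma integral_rpow_mul_comp_inv_sqrt_smul_sub (f : E → ℝ) (ht : 0 < t) (x : E) :
    ∫ y, t ^ (-(finrank ℝ E : ℝ) / 2) * f ((√t)⁻¹ • (x - y)) ∂μ = ∫ u, f u ∂μ := by
  have hst : 0 < √t := sqrt_pos.2 ht
  have key : t ^ (-(finrank ℝ E : ℝ) / 2) * √t ^ finrank ℝ E = 1 := by
    rw [sqrt_eq_rpow, ← rpow_natCast, ← rpow_mul ht.le, ← rpow_add ht]
    ring_nf
    exact rpow_zero t
  rw [integral_const_mul, integral_sub_left_eq_self (fun z => f ((√t)⁻¹ • z)) μ,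
    Measure.integral_comp_smul, inv_pow, inv_inv, abs_of_pos (pow_pos hst _), smul_eq_mul,
    ← mul_assoc, key, one_mul]

end Rescaling

theorem stmt_2_general (d : ℕ) (T r C₁ C₂ : ℝ) (hr : 0 < r)
    (hC₁ : 0 < C₁) (hC₂ : 0 < C₂)
    (G : ℝ → EuclideanSpace ℝ (Fin d) → EuclideanSpace ℝ (Fin d) → ℝ)
    (hGpos : ∀ t, 0 < t → t ≤ T → ∀ x y, 0 ≤ G t x y)
    (hGbd : ∀ t, 0 < t → t ≤ T → ∀ x y,
      G t x y ≤ C₁ * t ^ (-(d : ℝ) / 2) * Real.exp (-C₂ * ‖x - y‖ ^ 2 / t))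
    (ρ : EuclideanSpace ℝ (Fin d) → ℝ)
    (hρ : ∀ x, ρ x = 1 / (1 + ‖x‖ ^ r)) :
    ∃ C > 0, ∀ t, 0 < t → t ≤ T → ∀ x,
      ∫ y : EuclideanSpace ℝ (Fin d), G t x y * ρ y ≤ C * ρ x := by
  set φ : EuclideanSpace ℝ (Fin d) → ℝ := weightedGaussian (√T ^ r) r C₂
  have hφ : Integrable φ := integrable_weightedGaussian _ hr.le hC₂
  set J := ∫ u, φ u
  have hJ : 0 ≤ J := integral_nonneg (weightedGaussian_nonneg (by positivity) _)
  have hρ_nonneg (x) : 0 ≤ ρ x := by rw [hρ]; positivity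
  refine ⟨C₁ * 2 ^ r * (J + 1), mul_pos (by positivity) (by linarith), fun t ht htT x => ?_⟩
  have hρx := hρ_nonneg x
  have hbound (y) : G t x y * ρ y ≤
      C₁ * 2 ^ r * ρ x * (t ^ (-(d : ℝ) / 2) * φ ((√t)⁻¹ • (x - y))) := calc
    G t x y * ρ y ≤ C₁ * t ^ (-(d : ℝ) / 2) * exp (-C₂ * ‖x - y‖ ^ 2 / t) *
        (2 ^ r * (1 + ‖x - y‖ ^ r) * ρ x) := by
      refine mul_le_mul (hGbd t ht htT x y) ?_ (hρ_nonneg y) (by positivity)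
      simpa only [hρ, one_div] using inv_one_add_norm_rpow_le hr.le x y
    _ = C₁ * 2 ^ r * ρ x * (t ^ (-(d : ℝ) / 2) *
        (exp (-C₂ * ‖x - y‖ ^ 2 / t) * (1 + ‖x - y‖ ^ r))) := by ring
    _ ≤ _ := by
      gcongr
      exact exp_neg_mul_sq_div_mul_one_add_rpow_le_weightedGaussian C₂ hr.le ht htT (x - y)
  have hscale := integral_rpow_mul_comp_inv_sqrt_smul_sub (μ := volume) φ ht x
  rw [finrank_euclideanSpace_fin] at hscale
  calc ∫ y, G t x y * ρ y
      ≤ ∫ y, C₁ * 2 ^ r * ρ x * (t ^ (-(d : ℝ) / 2) * φ ((√t)⁻¹ • (x - y))) :=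
        integral_mono_of_nonneg
          (ae_of_all _ fun y => mul_nonneg (hGpos t ht htT x y) (hρ_nonneg y))
          (((hφ.comp_inv_sqrt_smul_sub ht x).const_mul _).const_mul _) (ae_of_all _ hbound)
    _ = C₁ * 2 ^ r * J * ρ x := by rw [integral_const_mul, hscale]; ring
    _ ≤ C₁ * 2 ^ r * (J + 1) * ρ x := by gcongr; linarith

/-- Gaussian-dominated kernel G integrates the weight ρ back into Cρ. -/
theorem stmt_2 (d : ℕ) (hd : 1 ≤ d) (T r C₁ C₂ : ℝ) (hT : 0 < T) (hr : 0 < r)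
    (hC₁ : 0 < C₁) (hC₂ : 0 < C₂)
    (G : ℝ → EuclideanSpace ℝ (Fin d) → EuclideanSpace ℝ (Fin d) → ℝ)
    (hGmeas : ∀ t, 0 < t → t ≤ T → ∀ x, Measurable (G t x))
    (hGpos : ∀ t, 0 < t → t ≤ T → ∀ x y, 0 ≤ G t x y)
    (hGbd : ∀ t, 0 < t → t ≤ T → ∀ x y,
      G t x y ≤ C₁ * t ^ (-(d : ℝ) / 2) * Real.exp (-C₂ * ‖x - y‖ ^ 2 / t))
    (ρ : EuclideanSpace ℝ (Fin d) → ℝ)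
    (hρ : ∀ x, ρ x = 1 / (1 + ‖x‖ ^ r)) :
    ∃ C > 0, ∀ t, 0 < t → t ≤ T → ∀ x,
      ∫ y : EuclideanSpace ℝ (Fin d), G t x y * ρ y ≤ C * ρ x :=
  stmt_2_general d T r C₁ C₂ hr hC₁ hC₂ G hGpos hGbd ρ hρ
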